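/- If P is the projector of a pure ε-approximate ((n,K,δ))_d QECC, then for every subset S with |S| < δ: K²/d_S ≤ A'_S(P,P) ≤ K²/d_S + K²ε², and K/d_S ≤ B'_S(P,P) ≤ K·[1/d_S + ε²(1 + (K+1)d_S)]. -/

import Mathlib

open scoped BigOperators Matrix
open Matrix

noncomputable section

namespace ApproxKUniform

variable {n d : ℕ}

/-- Hilbert–Schmidt (Frobenius) norm of a square complex matrix. -/
def hsNorm {α : Type*} [Fintype α] (A : Matrix α α ℂ) : ℝ :=
  Real.sqrt ((Aᴴ * A).trace).re

/-- Combine an assignment on a subset `S` of sites with one on its complement. -/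
def glue (S : Finset (Fin n)) (a : {i : Fin n // i ∈ S} → Fin d)
    (c : {i : Fin n // i ∉ S} → Fin d) : Fin n → Fin d :=
  fun i => if h : i ∈ S then a ⟨i, h⟩ else c ⟨i, h⟩

/-- Partial trace (onto subsystem `S`) of an operator `M` on `n` qudits. -/
def optrace (S : Finset (Fin n)) (M : Matrix (Fin n → Fin d) (Fin n → Fin d) ℂ) :
    Matrix ({i : Fin n // i ∈ S} → Fin d) ({i : Fin n // i ∈ S} → Fin d) ℂ :=
  Matrix.of fun a b => ∑ c : {i : Fin n // i ∉ S} → Fin d, M (glue S a c) (glue S b c)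

/-- Reduced density matrix of a pure state `ψ` on subsystem `S`. -/
def rdm (S : Finset (Fin n)) (ψ : (Fin n → Fin d) → ℂ) :
    Matrix ({i : Fin n // i ∈ S} → Fin d) ({i : Fin n // i ∈ S} → Fin d) ℂ :=
  optrace S (Matrix.of fun x y => ψ x * star (ψ y))

/-- Purity `Tr (ρ_S²)` of the reduced state on subsystem `S`. -/
def purity (S : Finset (Fin n)) (ψ : (Fin n → Fin d) → ℂ) : ℝ :=
  ((rdm S ψ * rdm S ψ).trace).re

/-- `ψ` is an ε-approximate k-uniform state (purity form):
`Tr(ρ_S²) ≤ 1/d^k + ε²` for every `S` of size `k`. -/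
def IsApproxUniform (d : ℕ) {n : ℕ} (k : ℕ) (ε : ℝ) (ψ : (Fin n → Fin d) → ℂ) : Prop :=
  ∀ S : Finset (Fin n), S.card = k → purity S ψ ≤ 1 / (d : ℝ) ^ k + ε ^ 2

/-- Rains unitary enumerator `A'_S(P,P) = Tr(P_S²)`. -/
def enumA {n d : ℕ} (S : Finset (Fin n))
    (P : Matrix (Fin n → Fin d) (Fin n → Fin d) ℂ) : ℝ :=
  ((optrace S P * optrace S P).trace).re

/-- Rains unitary enumerator `B'_S(P,P) = Tr(P_{S^c}²)`. -/
def enumB {n d : ℕ} (S : Finset (Fin n))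
    (P : Matrix (Fin n → Fin d) (Fin n → Fin d) ℂ) : ℝ :=
  ((optrace Sᶜ P * optrace Sᶜ P).trace).re

set_option linter.unusedSectionVars false

section HS
variable {α : Type*} [Fintype α] [DecidableEq α]

def toE (A : Matrix α α ℂ) : EuclideanSpace ℂ (α × α) :=
  WithLp.toLp 2 (fun p : α × α => A p.1 p.2)

lemma toE_add (A B : Matrix α α ℂ) : toE (A + B) = toE A + toE B := rfl
lemma toE_sub (A B : Matrix α α ℂ) : toE (A - B) = toE A - toE B := rfl
lemma toE_smul (c : ℂ) (A : Matrix α α ℂ) : toE (c • A) = c • toE A := rfl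

lemma toE_sum {ι : Type*} (s : Finset ι) (f : ι → Matrix α α ℂ) :
    toE (∑ i ∈ s, f i) = ∑ i ∈ s, toE (f i) := by
  classical
  induction s using Finset.induction_on with
  | empty => rfl
  | insert _ _ h ih => rw [Finset.sum_insert h, Finset.sum_insert h, toE_add, ih]

lemma inner_toE (A B : Matrix α α ℂ) :
    (inner ℂ (toE A) (toE B) : ℂ) = ∑ p : α × α, (starRingEnd ℂ) (A p.1 p.2) * B p.1 p.2 := by
  rw [PiLp.inner_apply]; exact Finset.sum_congr rfl fun p _ => RCLike.inner_apply' _ _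

lemma trace_mul_toE (A B : Matrix α α ℂ) :
    (A * B).trace = (inner ℂ (toE Aᴴ) (toE B) : ℂ) := by
  rw [inner_toE]
  simp only [Matrix.trace, Matrix.diag, Matrix.mul_apply, Matrix.conjTranspose_apply]
  rw [Fintype.sum_prod_type]
  rw [Finset.sum_comm]
  congr 1; ext x; congr 1; ext y
  simp [mul_comm]

lemma re_trace_sq (A : Matrix α α ℂ) :
    ((Aᴴ * A).trace).re = ∑ p : α × α, ‖A p.1 p.2‖ ^ 2 := by
  rw [trace_mul_toE, conjTranspose_conjTranspose, inner_toE, Complex.re_sum]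
  congr 1; ext p
  rw [mul_comm, Complex.mul_conj]
  simp [Complex.normSq_eq_norm_sq, ← Complex.ofReal_pow, toE]

lemma hsNorm_toE (A : Matrix α α ℂ) : hsNorm A = ‖toE A‖ := by
  rw [hsNorm, re_trace_sq, EuclideanSpace.norm_eq]; rfl

lemma norm_toE_sq (A : Matrix α α ℂ) : ‖toE A‖ ^ 2 = ((Aᴴ * A).trace).re := by
  rw [← hsNorm_toE, hsNorm, Real.sq_sqrt]
  rw [re_trace_sq]
  exact Finset.sum_nonneg fun p _ => by positivity

end HS

section Glue
variable {n d : ℕ}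

def glueEquiv (S : Finset (Fin n)) :
    ({i : Fin n // i ∈ S} → Fin d) × ({i : Fin n // i ∉ S} → Fin d) ≃ (Fin n → Fin d) where
  toFun p := glue S p.1 p.2
  invFun x := (fun i => x i.1, fun i => x i.1)
  left_inv p := by
    ext i
    · simp [glue, i.2]
    · simp [glue, i.2]
  right_inv x := by
    funext i; by_cases h : i ∈ S <;> simp [glue, h]

lemma sum_glue (S : Finset (Fin n)) (f : (Fin n → Fin d) → ℂ) :
    ∑ x, f x = ∑ a : {i : Fin n // i ∈ S} → Fin d, ∑ c : {i : Fin n // i ∉ S} → Fin d,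
      f (glue S a c) := by
  rw [← Equiv.sum_comp (glueEquiv S) f, Fintype.sum_prod_type]; rfl

lemma trace_optrace (S : Finset (Fin n)) (M : Matrix (Fin n → Fin d) (Fin n → Fin d) ℂ) :
    (optrace S M).trace = M.trace := by
  simp only [Matrix.trace, Matrix.diag, optrace, Matrix.of_apply]
  exact (sum_glue S fun x => M x x).symm

lemma optrace_sum {ι : Type*} (S : Finset (Fin n)) (s : Finset ι)
    (M : ι → Matrix (Fin n → Fin d) (Fin n → Fin d) ℂ) :
    optrace S (∑ i ∈ s, M i) = ∑ i ∈ s, optrace S (M i) := by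
  ext a b
  simp only [optrace, Matrix.of_apply, Finset.sum_apply, Matrix.sum_apply]
  exact Finset.sum_comm

def outer (ψ φ : (Fin n → Fin d) → ℂ) : Matrix (Fin n → Fin d) (Fin n → Fin d) ℂ :=
  Matrix.of fun x y => ψ x * star (φ y)

def R (S : Finset (Fin n)) (ψ φ : (Fin n → Fin d) → ℂ) :
    Matrix ({i : Fin n // i ∈ S} → Fin d) ({i : Fin n // i ∈ S} → Fin d) ℂ :=
  optrace S (outer ψ φ)

lemma rdm_eq_R (S : Finset (Fin n)) (ψ : (Fin n → Fin d) → ℂ) : rdm S ψ = R S ψ ψ := rfl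

lemma R_apply (S : Finset (Fin n)) (ψ φ : (Fin n → Fin d) → ℂ) (a b) :
    R S ψ φ a b = ∑ c, ψ (glue S a c) * (starRingEnd ℂ) (φ (glue S b c)) := rfl

lemma R_add_left (S : Finset (Fin n)) (ψ ψ' φ : (Fin n → Fin d) → ℂ) :
    R S (ψ + ψ') φ = R S ψ φ + R S ψ' φ := by
  ext a b
  simp [R_apply, add_mul, Finset.sum_add_distrib]

lemma R_add_right (S : Finset (Fin n)) (ψ φ φ' : (Fin n → Fin d) → ℂ) :
    R S ψ (φ + φ') = R S ψ φ + R S ψ φ' := by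
  ext a b
  simp [R_apply, mul_add, Finset.sum_add_distrib]

lemma R_smul_left (S : Finset (Fin n)) (c : ℂ) (ψ φ : (Fin n → Fin d) → ℂ) :
    R S (c • ψ) φ = c • R S ψ φ := by
  ext a b
  simp [R_apply, Finset.mul_sum, mul_assoc]

lemma R_smul_right (S : Finset (Fin n)) (c : ℂ) (ψ φ : (Fin n → Fin d) → ℂ) :
    R S ψ (c • φ) = (starRingEnd ℂ) c • R S ψ φ := by
  ext a b
  simp [R_apply, Finset.mul_sum]
  ring_nf
  congr 1; ext c'
  ring

lemma R_conjTranspose (S : Finset (Fin n)) (ψ φ : (Fin n → Fin d) → ℂ) :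
    (R S ψ φ)ᴴ = R S φ ψ := by
  ext a b
  simp [R_apply, Matrix.conjTranspose_apply, mul_comm]

lemma trace_R (S : Finset (Fin n)) (ψ φ : (Fin n → Fin d) → ℂ) :
    (R S ψ φ).trace = ∑ x, ψ x * (starRingEnd ℂ) (φ x) := by
  rw [R, trace_optrace]
  rfl

lemma trace_R_self (S : Finset (Fin n)) (ψ : (Fin n → Fin d) → ℂ)
    (hψ : ∑ x, ‖ψ x‖ ^ 2 = 1) : (R S ψ ψ).trace = 1 := by
  rw [trace_R]
  have : ∀ x : Fin n → Fin d, ψ x * (starRingEnd ℂ) (ψ x) = ((‖ψ x‖ ^ 2 : ℝ) : ℂ) := by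
    intro x
    rw [Complex.mul_conj]
    simp [Complex.normSq_eq_norm_sq]
  rw [Finset.sum_congr rfl fun x _ => this x, ← Complex.ofReal_sum, hψ, Complex.ofReal_one]

end Glue

section Swap
variable {n d : ℕ}

lemma trace_mul_apply {β : Type*} [Fintype β] (M N : Matrix β β ℂ) :
    (M * N).trace = ∑ x, ∑ y, M x y * N y x := by
  simp [Matrix.trace, Matrix.diag, Matrix.mul_apply]

/-- take the `T`-part from `x` and the rest from `y` -/
def mix (T : Finset (Fin n)) (x y : Fin n → Fin d) : Fin n → Fin d :=
  fun i => if i ∈ T then x i else y i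

lemma mix_glue_left (T : Finset (Fin n)) (c c' : {i : Fin n // i ∈ T} → Fin d)
    (a b : {i : Fin n // i ∉ T} → Fin d) :
    mix T (glue T c' b) (glue T c a) = glue T c' a := by
  funext i; by_cases h : i ∈ T <;> simp [mix, glue, h]

lemma mix_compl (S : Finset (Fin n)) (x y : Fin n → Fin d) :
    mix Sᶜ x y = mix S y x := by
  funext i; by_cases h : i ∈ S <;> simp [mix, h, Finset.mem_compl]

lemma trace_R_mul_R (T : Finset (Fin n)) (ψ₁ ψ₂ φ₁ φ₂ : (Fin n → Fin d) → ℂ) :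
    (R T ψ₁ ψ₂ * R T φ₁ φ₂).trace = ∑ x, ∑ y,
      (ψ₁ x * (starRingEnd ℂ) (ψ₂ (mix T y x))) *
        (φ₁ y * (starRingEnd ℂ) (φ₂ (mix T x y))) := by
  rw [trace_mul_apply]
  simp only [R_apply]
  rw [sum_glue T (fun x => ∑ y, (ψ₁ x * (starRingEnd ℂ) (ψ₂ (mix T y x))) *
        (φ₁ y * (starRingEnd ℂ) (φ₂ (mix T x y))))]
  refine Finset.sum_congr rfl fun c _ => ?_
  calc ∑ c' : {i : Fin n // i ∈ T} → Fin d,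
        (∑ a, ψ₁ (glue T c a) * (starRingEnd ℂ) (ψ₂ (glue T c' a))) *
          ∑ b, φ₁ (glue T c' b) * (starRingEnd ℂ) (φ₂ (glue T c b))
      = ∑ c' : {i : Fin n // i ∈ T} → Fin d, ∑ a, ∑ b,
          (ψ₁ (glue T c a) * (starRingEnd ℂ) (ψ₂ (glue T c' a))) *
            (φ₁ (glue T c' b) * (starRingEnd ℂ) (φ₂ (glue T c b))) := by
        refine Finset.sum_congr rfl fun c' _ => ?_
        rw [Finset.sum_mul_sum]
    _ = ∑ a, ∑ c' : {i : Fin n // i ∈ T} → Fin d, ∑ b,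
          (ψ₁ (glue T c a) * (starRingEnd ℂ) (ψ₂ (glue T c' a))) *
            (φ₁ (glue T c' b) * (starRingEnd ℂ) (φ₂ (glue T c b))) := Finset.sum_comm
    _ = ∑ a, ∑ y, (ψ₁ (glue T c a) * (starRingEnd ℂ) (ψ₂ (mix T y (glue T c a)))) *
            (φ₁ y * (starRingEnd ℂ) (φ₂ (mix T (glue T c a) y))) := by
        refine Finset.sum_congr rfl fun a _ => ?_
        rw [sum_glue T (fun y => (ψ₁ (glue T c a) * (starRingEnd ℂ) (ψ₂ (mix T y (glue T c a)))) *
            (φ₁ y * (starRingEnd ℂ) (φ₂ (mix T (glue T c a) y))))]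
        refine Finset.sum_congr rfl fun c' _ => Finset.sum_congr rfl fun b _ => ?_
        rw [mix_glue_left, mix_glue_left]
    _ = _ := rfl

lemma swap_identity (S : Finset (Fin n)) (ψ φ : (Fin n → Fin d) → ℂ) :
    (R Sᶜ ψ ψ * R Sᶜ φ φ).trace = (R S φ ψ * R S ψ φ).trace := by
  rw [trace_R_mul_R, trace_R_mul_R]
  simp only [mix_compl]
  rw [Finset.sum_comm]
  exact Finset.sum_congr rfl fun x _ => Finset.sum_congr rfl fun y _ => by ring

end Swap

section Spectral
variable {m : Type*} [Fintype m] [DecidableEq m] {P : Matrix m m ℂ}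

lemma spectral_entry (hP : P.IsHermitian) (x y : m) :
    P x y = ∑ k, (hP.eigenvalues k : ℂ) *
      (hP.eigenvectorBasis k x * (starRingEnd ℂ) (hP.eigenvectorBasis k y)) := by
  conv_lhs => rw [hP.spectral_theorem]
  rw [Unitary.conjStarAlgAut_apply, Matrix.mul_apply]
  refine Finset.sum_congr rfl fun k _ => ?_
  rw [Matrix.mul_diagonal]
  simp only [Matrix.star_apply, Matrix.IsHermitian.eigenvectorUnitary_apply,
    Function.comp_apply, RCLike.star_def]
  rw [mul_comm (hP.eigenvalues k : ℂ) _, mul_right_comm]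
  rfl

lemma eig_zero_or_one (hP : P.IsHermitian) (hproj : P * P = P) (k : m) :
    hP.eigenvalues k = 0 ∨ hP.eigenvalues k = 1 := by
  have h1 := hP.mulVec_eigenvectorBasis k
  have h2 : P *ᵥ (P *ᵥ ⇑(hP.eigenvectorBasis k)) = P *ᵥ ⇑(hP.eigenvectorBasis k) := by
    rw [Matrix.mulVec_mulVec, hproj]
  rw [h1, Matrix.mulVec_smul, h1, smul_smul] at h2
  have hnz : ⇑(hP.eigenvectorBasis k) ≠ 0 := by
    have := hP.eigenvectorBasis.orthonormal.ne_zero k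
    intro hc
    apply this
    ext i
    exact congrFun hc i
  have h3 : (hP.eigenvalues k * hP.eigenvalues k - hP.eigenvalues k) • ⇑(hP.eigenvectorBasis k)
      = 0 := by
    rw [sub_smul, h2, sub_self]
  rcases smul_eq_zero.mp h3 with h | h
  · have : hP.eigenvalues k * (hP.eigenvalues k - 1) = 0 := by ring_nf; linarith [h]
    rcases mul_eq_zero.mp this with h' | h'
    · exact Or.inl h'
    · exact Or.inr (by linarith)
  · exact absurd h hnz

lemma inner_eigenvectorBasis (hP : P.IsHermitian) (k l : m) :
    ∑ x, (starRingEnd ℂ) (hP.eigenvectorBasis k x) * hP.eigenvectorBasis l x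
      = if k = l then 1 else 0 := by
  have := orthonormal_iff_ite.mp hP.eigenvectorBasis.orthonormal k l
  rw [← this, PiLp.inner_apply]
  simp_rw [RCLike.inner_apply']

end Spectral

section Helpers

lemma sum_norm_sq_eq_re {τ : Type*} [Fintype τ] (f : τ → ℂ) :
    ∑ x, ‖f x‖ ^ 2 = (∑ x, (starRingEnd ℂ) (f x) * f x).re := by
  rw [Complex.re_sum]
  refine Finset.sum_congr rfl fun x _ => ?_
  rw [mul_comm, Complex.mul_conj]
  simp [Complex.normSq_eq_norm_sq, ← Complex.ofReal_pow]

lemma norm_combo {τ : Type*} [Fintype τ] (u w : τ → ℂ) (a b : ℂ)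
    (huu : ∑ x, (starRingEnd ℂ) (u x) * u x = 1)
    (hww : ∑ x, (starRingEnd ℂ) (w x) * w x = 1)
    (huw : ∑ x, (starRingEnd ℂ) (u x) * w x = 0)
    (hwu : ∑ x, (starRingEnd ℂ) (w x) * u x = 0)
    (hab : ‖a‖ ^ 2 + ‖b‖ ^ 2 = 1) :
    ∑ x, ‖(a • u + b • w) x‖ ^ 2 = 1 := by
  rw [sum_norm_sq_eq_re]
  have key : ∑ x, (starRingEnd ℂ) ((a • u + b • w) x) * ((a • u + b • w) x)
      = (starRingEnd ℂ) a * a * (∑ x, (starRingEnd ℂ) (u x) * u x)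
        + ((starRingEnd ℂ) a * b * (∑ x, (starRingEnd ℂ) (u x) * w x)
        + ((starRingEnd ℂ) b * a * (∑ x, (starRingEnd ℂ) (w x) * u x)
        + (starRingEnd ℂ) b * b * (∑ x, (starRingEnd ℂ) (w x) * w x))) := by
    simp only [Finset.mul_sum]
    rw [← Finset.sum_add_distrib, ← Finset.sum_add_distrib, ← Finset.sum_add_distrib]
    refine Finset.sum_congr rfl fun x _ => ?_
    simp only [Pi.add_apply, Pi.smul_apply, smul_eq_mul, map_add, _root_.map_mul]
    ring
  rw [key, huu, hww, huw, hwu]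
  simp only [mul_one, mul_zero, add_zero, zero_add]
  rw [Complex.add_re, mul_comm ((starRingEnd ℂ) a) a, mul_comm ((starRingEnd ℂ) b) b,
    Complex.mul_conj, Complex.mul_conj]
  rw [← hab]
  simp [Complex.normSq_eq_norm_sq, ← Complex.ofReal_pow]

variable {α : Type*} [Fintype α] [DecidableEq α]

lemma re_inner_toE_herm_skew (H G : Matrix α α ℂ) (hH : Hᴴ = H) (hG : Gᴴ = -G) :
    (inner ℂ (toE H) (toE G) : ℂ).re = 0 := by
  have hconj : (starRingEnd ℂ) (inner ℂ (toE H) (toE G) : ℂ) = -(inner ℂ (toE H) (toE G) : ℂ) := by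
    rw [inner_toE, map_sum, ← Finset.sum_neg_distrib]
    refine Fintype.sum_equiv (Equiv.prodComm α α) _ _ fun p => ?_
    simp only [_root_.map_mul, RingHomCompTriple.comp_apply, RingHom.id_apply, Complex.conj_conj,
      Equiv.prodComm_apply, Prod.fst_swap, Prod.snd_swap]
    have h1 : H p.1 p.2 = (starRingEnd ℂ) (H p.2 p.1) := by
      conv_lhs => rw [← hH]
      rfl
    have h2 : (starRingEnd ℂ) (G p.1 p.2) = -G p.2 p.1 := by
      have h := congrFun (congrFun hG p.2) p.1
      simpa [Matrix.conjTranspose_apply] using h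
    rw [h1, h2]
    ring
  have := congrArg Complex.re hconj
  rw [Complex.conj_re, Complex.neg_re] at this
  linarith

lemma inner_toE_one (M : Matrix α α ℂ) : (inner ℂ (toE (1 : Matrix α α ℂ)) (toE M) : ℂ) = M.trace := by
  rw [inner_toE, Fintype.sum_prod_type]
  simp [Matrix.one_apply, apply_ite (starRingEnd ℂ), Matrix.trace, Matrix.diag]

lemma norm_toE_one_sq : ‖toE (1 : Matrix α α ℂ)‖ ^ 2 = (Fintype.card α : ℝ) := by
  rw [norm_toE_sq]
  simp [Matrix.trace_one]

lemma trace_mul_self_card_one {β : Type*} [Fintype β] (h : Fintype.card β = 1)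
    (M : Matrix β β ℂ) : (M * M).trace = M.trace ^ 2 := by
  obtain ⟨b₀, hb⟩ := Fintype.card_eq_one_iff.mp h
  have huniv : (Finset.univ : Finset β) = {b₀} := by
    ext b; simp [hb b]
  rw [trace_mul_apply]
  simp only [Matrix.trace, Matrix.diag, huniv, Finset.sum_singleton]
  ring

end Helpers

section Helpers2
variable {n d : ℕ}

lemma trace_optrace_mul_of_card_one (T : Finset (Fin n))
    (h : Fintype.card ({i : Fin n // i ∉ T} → Fin d) = 1)
    (M N : Matrix (Fin n → Fin d) (Fin n → Fin d) ℂ) :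
    (optrace T M * optrace T N).trace = (M * N).trace := by
  obtain ⟨a₀, ha⟩ := Fintype.card_eq_one_iff.mp h
  have huniv : (Finset.univ : Finset ({i : Fin n // i ∉ T} → Fin d)) = {a₀} := by
    ext b; simp [ha b]
  rw [trace_mul_apply, trace_mul_apply]
  conv_lhs => simp only [optrace, Matrix.of_apply, huniv, Finset.sum_singleton]
  rw [sum_glue T (fun x => ∑ y, M x y * N y x)]
  simp only [huniv, Finset.sum_singleton]
  refine Finset.sum_congr rfl fun c _ => ?_
  rw [sum_glue T (fun y => M (glue T c a₀) y * N y (glue T c a₀))]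
  simp only [huniv, Finset.sum_singleton]

lemma R_combo (S : Finset (Fin n)) (u w : (Fin n → Fin d) → ℂ) (a b : ℂ) :
    R S (a • u + b • w) (a • u + b • w)
      = (a * (starRingEnd ℂ) a) • R S u u + (a * (starRingEnd ℂ) b) • R S u w
        + (b * (starRingEnd ℂ) a) • R S w u + (b * (starRingEnd ℂ) b) • R S w w := by
  simp only [R_add_left, R_add_right, R_smul_left, R_smul_right]
  module

lemma cross_diff (S : Finset (Fin n)) (u w : (Fin n → Fin d) → ℂ) (a b : ℂ) :
    R S (a • u + b • w) (a • u + b • w) - R S (a • u + (-b) • w) (a • u + (-b) • w)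
      = (2 * (a * (starRingEnd ℂ) b)) • R S u w + (2 * (b * (starRingEnd ℂ) a)) • R S w u := by
  rw [R_combo, R_combo]
  simp only [map_neg, mul_neg, neg_mul, neg_neg, neg_smul]
  module

end Helpers2


set_option maxHeartbeats 2000000 in
/-- If `P` is the projector of a pure ε-approximate `((n,K,δ))_d`
QECC (every normalized codeword has all of its marginals on sets of size `≤ δ−1`
within Hilbert–Schmidt distance `ε` of maximally mixed), then for every `S` with
`|S| < δ`:  `K²/d_S ≤ A'_S ≤ K²/d_S + K²ε²` and
`K/d_S ≤ B'_S ≤ K·[1/d_S + ε²(1 + (K+1)d_S)]`. -/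
theorem enum_bounds_pure_approxQECC {n d K δc : ℕ} (hK : 0 < K)
    (ε : ℝ) (hε : 0 ≤ ε)
    (P : Matrix (Fin n → Fin d) (Fin n → Fin d) ℂ)
    (hP : P.IsHermitian) (hproj : P * P = P) (hrank : P.trace = K)
    (hcode : ∀ ψ : (Fin n → Fin d) → ℂ, P.mulVec ψ = ψ → (∑ x, ‖ψ x‖ ^ 2 = 1) →
      ∀ S : Finset (Fin n), S.card ≤ δc - 1 →
        hsNorm (rdm S ψ - (((d : ℂ) ^ S.card)⁻¹ • 1 : Matrix _ _ ℂ)) ≤ ε) :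
    ∀ S : Finset (Fin n), S.card < δc →
      ((K : ℝ) ^ 2 / (d : ℝ) ^ S.card ≤ enumA S P ∧
        enumA S P ≤ (K : ℝ) ^ 2 / (d : ℝ) ^ S.card + (K : ℝ) ^ 2 * ε ^ 2) ∧
      ((K : ℝ) / (d : ℝ) ^ S.card ≤ enumB S P ∧
        enumB S P ≤ (K : ℝ) *
          (1 / (d : ℝ) ^ S.card + ε ^ 2 * (1 + ((K : ℝ) + 1) * (d : ℝ) ^ S.card))) := by
  intro S hS
  have hδ : S.card ≤ δc - 1 := by omega
  have hcardα : Fintype.card ({i : Fin n // i ∈ S} → Fin d) = d ^ S.card := by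
    rw [Fintype.card_fun, Fintype.card_fin, Fintype.card_coe]
  rcases lt_or_ge (d ^ S.card) 2 with hlt | h2
  · rcases (by omega : d ^ S.card = 0 ∨ d ^ S.card = 1) with h0 | h1
    · -- impossible: the whole Hilbert space is empty
      exfalso
      obtain ⟨hd0, hc0⟩ := pow_eq_zero_iff'.mp h0
      have hSne : S.Nonempty := Finset.card_pos.mp (Nat.pos_of_ne_zero hc0)
      obtain ⟨i₀, hi₀⟩ := hSne
      have hemp : IsEmpty (Fin n → Fin d) := by
        subst hd0
        exact ⟨fun x => (x i₀).elim0⟩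
      have hz : P.trace = 0 := by
        rw [Matrix.trace]
        simp [Finset.univ_eq_empty]
      rw [hrank] at hz
      have : K = 0 := by exact_mod_cast hz
      omega
    · -- the subsystem is trivial
      have hre : (d : ℝ) ^ S.card = 1 := by exact_mod_cast h1
      have hA : enumA S P = (K : ℝ) ^ 2 := by
        rw [enumA, trace_mul_self_card_one (by rw [hcardα, h1]), trace_optrace, hrank]
        have : ((K : ℂ)) ^ 2 = ((K ^ 2 : ℕ) : ℂ) := by push_cast; ring
        rw [this, Complex.natCast_re]
        push_cast; ring
      have hcard2 : Fintype.card ({i : Fin n // i ∉ Sᶜ} → Fin d) = 1 := by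
        have hs : Fintype.card {i : Fin n // i ∉ Sᶜ} = S.card := by
          rw [Fintype.card_subtype]
          congr 1
          ext i; simp
        rw [Fintype.card_fun, Fintype.card_fin, hs]
        exact h1
      have hB : enumB S P = (K : ℝ) := by
        rw [enumB, trace_optrace_mul_of_card_one Sᶜ hcard2, hproj, hrank, Complex.natCast_re]
      rw [hA, hB, hre]
      have hK1 : (1 : ℝ) ≤ (K : ℝ) := by exact_mod_cast hK
      refine ⟨⟨by nlinarith, by nlinarith [sq_nonneg ε, sq_nonneg (K:ℝ)]⟩,
        ⟨by nlinarith, by nlinarith [sq_nonneg ε]⟩⟩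
  · -- generic case : d_S ≥ 2
    have hdSR_cast : (d : ℝ) ^ S.card = ((d ^ S.card : ℕ) : ℝ) := by push_cast; ring
    set dSR : ℝ := (d : ℝ) ^ S.card with hdSR
    have h2R : (2 : ℝ) ≤ dSR := by rw [hdSR_cast]; exact_mod_cast h2
    have hdSR0 : dSR ≠ 0 := by linarith
    have hdSRpos : 0 < dSR := by linarith
    have hdC : ((d : ℂ) ^ S.card) = ((dSR : ℝ) : ℂ) := by
      rw [hdSR]; push_cast; ring
    set Dm : Matrix ({i : Fin n // i ∈ S} → Fin d) ({i : Fin n // i ∈ S} → Fin d) ℂ :=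
      ((d : ℂ) ^ S.card)⁻¹ • 1 with hDm
    set v : (Fin n → Fin d) → (Fin n → Fin d) → ℂ := fun k x => hP.eigenvectorBasis k x with hv
    set I₁ : Finset (Fin n → Fin d) :=
      Finset.univ.filter (fun k => hP.eigenvalues k = 1) with hI₁
    -- orthonormality
    have huu : ∀ k, ∑ x, (starRingEnd ℂ) (v k x) * v k x = 1 := by
      intro k
      simpa using inner_eigenvectorBasis hP k k
    have hkl : ∀ k l, k ≠ l → ∑ x, (starRingEnd ℂ) (v k x) * v l x = 0 := by
      intro k l hne
      simpa [hne] using inner_eigenvectorBasis hP k l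
    have hnormv : ∀ k, ∑ x, ‖v k x‖ ^ 2 = 1 := by
      intro k
      rw [sum_norm_sq_eq_re, huu k, Complex.one_re]
    -- the projector decomposes as a sum of codeword projectors
    have hcard1 : I₁.card = K := by
      have htr : ∑ k, (hP.eigenvalues k : ℂ) = (K : ℂ) := by
        rw [← hrank]
        rw [show P.trace = ∑ x, P x x from rfl]
        rw [Finset.sum_congr rfl fun x _ => spectral_entry hP x x]
        rw [Finset.sum_comm]
        refine Finset.sum_congr rfl fun k _ => ?_
        rw [← Finset.mul_sum]
        have : ∑ x, v k x * (starRingEnd ℂ) (v k x) = 1 := by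
          rw [← huu k]
          exact Finset.sum_congr rfl fun x _ => mul_comm _ _
        rw [show (∑ x, hP.eigenvectorBasis k x * (starRingEnd ℂ) (hP.eigenvectorBasis k x)) =
          (∑ x, v k x * (starRingEnd ℂ) (v k x)) from rfl, this, mul_one]
      have hsplit : ∑ k, (hP.eigenvalues k : ℂ) = (I₁.card : ℂ) := by
        rw [show ∑ k, (hP.eigenvalues k : ℂ)
            = ∑ k, (if hP.eigenvalues k = 1 then (1 : ℂ) else 0) from
          Finset.sum_congr rfl fun k _ => by
            rcases eig_zero_or_one hP hproj k with h | h <;> simp [h]]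
        rw [Finset.sum_boole, hI₁]
      have : (I₁.card : ℂ) = (K : ℂ) := by rw [← hsplit, htr]
      exact_mod_cast this
    have hPdec : P = ∑ k ∈ I₁, outer (v k) (v k) := by
      ext x y
      rw [spectral_entry hP x y, Matrix.sum_apply]
      rw [show (∑ k ∈ I₁, outer (v k) (v k) x y)
          = ∑ k, (if hP.eigenvalues k = 1 then v k x * (starRingEnd ℂ) (v k y) else 0) from by
        rw [hI₁, Finset.sum_filter]; rfl]
      refine Finset.sum_congr rfl fun k _ => ?_
      rcases eig_zero_or_one hP hproj k with h | h <;> simp [h, hv]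
    have hoptrS : optrace S P = ∑ k ∈ I₁, R S (v k) (v k) := by
      rw [hPdec, optrace_sum]; rfl
    have hoptrC : optrace Sᶜ P = ∑ k ∈ I₁, R Sᶜ (v k) (v k) := by
      rw [hPdec, optrace_sum]; rfl
    have hfix : ∀ k ∈ I₁, P *ᵥ v k = v k := by
      intro k hk
      have h := hP.mulVec_eigenvectorBasis k
      rw [hI₁, Finset.mem_filter] at hk
      rw [hk.2, one_smul] at h
      exact h
    have hcode' : ∀ ψ : (Fin n → Fin d) → ℂ, P *ᵥ ψ = ψ → (∑ x, ‖ψ x‖ ^ 2 = 1) →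
        ‖toE (R S ψ ψ - Dm)‖ ≤ ε := by
      intro ψ h1 h2'
      rw [← hsNorm_toE]
      exact hcode ψ h1 h2' S hδ
    have hdiagbnd : ∀ k ∈ I₁, ‖toE (R S (v k) (v k) - Dm)‖ ≤ ε := fun k hk =>
      hcode' _ (hfix k hk) (hnormv k)
    -- facts about Dm
    have hdCne : ((d : ℂ) ^ S.card) ≠ 0 := by
      rw [hdC]
      exact_mod_cast hdSR0
    have htrDm : Dm.trace = 1 := by
      rw [hDm, Matrix.trace_smul, Matrix.trace_one, hcardα, smul_eq_mul]
      rw [show ((d ^ S.card : ℕ) : ℂ) = (d : ℂ) ^ S.card from by push_cast; ring]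
      exact inv_mul_cancel₀ hdCne
    have hinnerDm : ∀ M : Matrix ({i : Fin n // i ∈ S} → Fin d)
        ({i : Fin n // i ∈ S} → Fin d) ℂ, M.trace = 0 →
        (inner ℂ (toE Dm) (toE M) : ℂ) = 0 := by
      intro M hM
      rw [hDm, toE_smul, inner_smul_left, inner_toE_one, hM, mul_zero]
    have hDmsq : ‖toE Dm‖ ^ 2 = dSR⁻¹ := by
      rw [hDm, toE_smul, norm_smul, mul_pow, norm_toE_one_sq, hcardα, hdC]
      rw [norm_inv, Complex.norm_real, Real.norm_eq_abs, abs_of_pos hdSRpos]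
      rw [← hdSR_cast]
      field_simp
    have htrP : ∀ k ∈ I₁, (R S (v k) (v k) - Dm).trace = 0 := by
      intro k hk
      rw [Matrix.trace_sub, trace_R_self S (v k) (hnormv k), htrDm, sub_self]
    -- ============ A part ============
    set E : Matrix ({i : Fin n // i ∈ S} → Fin d) ({i : Fin n // i ∈ S} → Fin d) ℂ :=
      ∑ k ∈ I₁, (R S (v k) (v k) - Dm) with hE
    have hEtr : E.trace = 0 := by
      rw [hE, Matrix.trace_sum]
      exact Finset.sum_eq_zero htrP
    have hTdec : optrace S P = (K : ℂ) • Dm + E := by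
      rw [hoptrS, hE, Finset.sum_sub_distrib, Finset.sum_const, hcard1,
        ← Nat.cast_smul_eq_nsmul ℂ K Dm]
      abel
    have hEnorm : ‖toE E‖ ≤ (K : ℝ) * ε := by
      rw [hE, toE_sum]
      refine le_trans (norm_sum_le _ _) ?_
      calc ∑ k ∈ I₁, ‖toE (R S (v k) (v k) - Dm)‖ ≤ ∑ _k ∈ I₁, ε :=
            Finset.sum_le_sum fun k hk => hdiagbnd k hk
        _ = (K : ℝ) * ε := by rw [Finset.sum_const, hcard1, nsmul_eq_mul]
    have hherm : (optrace S P)ᴴ = optrace S P := by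
      rw [hoptrS, Matrix.conjTranspose_sum]
      exact Finset.sum_congr rfl fun k _ => R_conjTranspose S (v k) (v k)
    have hA : enumA S P = (K : ℝ) ^ 2 * dSR⁻¹ + ‖toE E‖ ^ 2 := by
      have h0 : enumA S P = ‖toE (optrace S P)‖ ^ 2 := by
        rw [enumA, show (optrace S P * optrace S P) = ((optrace S P)ᴴ * optrace S P) from
          by rw [hherm]]
        exact (norm_toE_sq _).symm
      rw [h0, hTdec, toE_add, toE_smul, norm_add_sq (𝕜 := ℂ), inner_smul_left,
        hinnerDm E hEtr, mul_zero, norm_smul, Complex.norm_natCast]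
      simp only [map_zero, mul_zero, add_zero]
      rw [mul_pow, hDmsq]
    have hEsq : ‖toE E‖ ^ 2 ≤ (K : ℝ) ^ 2 * ε ^ 2 := by
      have := pow_le_pow_left₀ (norm_nonneg (toE E)) hEnorm 2
      calc ‖toE E‖ ^ 2 ≤ ((K : ℝ) * ε) ^ 2 := this
        _ = (K : ℝ) ^ 2 * ε ^ 2 := by ring
    have hApair : (K : ℝ) ^ 2 / dSR ≤ enumA S P ∧
        enumA S P ≤ (K : ℝ) ^ 2 / dSR + (K : ℝ) ^ 2 * ε ^ 2 := by
      rw [hA, div_eq_mul_inv]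
      constructor
      · nlinarith [sq_nonneg ‖toE E‖]
      · linarith
    -- ============ B part ============
    have hBsum : enumB S P = ∑ k ∈ I₁, ∑ l ∈ I₁, ‖toE (R S (v k) (v l))‖ ^ 2 := by
      rw [enumB, hoptrC, Finset.sum_mul_sum, Matrix.trace_sum, Complex.re_sum]
      refine Finset.sum_congr rfl fun k _ => ?_
      rw [Matrix.trace_sum, Complex.re_sum]
      refine Finset.sum_congr rfl fun l _ => ?_
      rw [swap_identity, ← R_conjTranspose]
      exact (norm_toE_sq _).symm
    have hdiagEq : ∀ k ∈ I₁, ‖toE (R S (v k) (v k))‖ ^ 2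
        = dSR⁻¹ + ‖toE (R S (v k) (v k) - Dm)‖ ^ 2 := by
      intro k hk
      have hsplit : toE (R S (v k) (v k)) = toE Dm + toE (R S (v k) (v k) - Dm) := by
        rw [← toE_add]
        congr 1
        rw [add_sub_cancel]
      rw [hsplit, norm_add_sq (𝕜 := ℂ), hinnerDm _ (htrP k hk), hDmsq]
      simp
    -- cross bound
    have hcross : ∀ k ∈ I₁, ∀ l ∈ I₁, k ≠ l →
        ‖toE (R S (v k) (v l))‖ ^ 2 ≤ 2 * ε ^ 2 := by
      intro k hk l hl hne
      set c : ℝ := (Real.sqrt 2)⁻¹ with hc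
      have hcpos : 0 < c := by
        rw [hc]
        positivity
      have hccR : c * c = 2⁻¹ := by
        rw [hc, ← mul_inv, Real.mul_self_sqrt (by norm_num)]
      have hcc : ((c : ℂ)) * ((c : ℂ)) = 2⁻¹ := by
        rw [← Complex.ofReal_mul, hccR]
        norm_num
      have hnc : ‖((c : ℂ))‖ ^ 2 = 2⁻¹ := by
        rw [Complex.norm_real, Real.norm_eq_abs, abs_of_pos hcpos, sq, hccR]
      have hcombo : ∀ a b : ℂ, ‖a‖ ^ 2 + ‖b‖ ^ 2 = 1 →
          ‖toE (R S (a • v k + b • v l) (a • v k + b • v l) - Dm)‖ ≤ ε := by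
        intro a b hab
        refine hcode' _ ?_ ?_
        · rw [Matrix.mulVec_add, Matrix.mulVec_smul, Matrix.mulVec_smul, hfix k hk, hfix l hl]
        · exact norm_combo (v k) (v l) a b (huu k) (huu l) (hkl k l hne)
            (hkl l k (Ne.symm hne)) hab
      -- bound on the hermitian part
      have hH : ‖toE (R S (v k) (v l) + R S (v l) (v k))‖ ≤ 2 * ε := by
        have hd := cross_diff S (v k) (v l) (c : ℂ) (c : ℂ)
        have hco : (2 * ((c : ℂ) * (starRingEnd ℂ) (c : ℂ))) = 1 := by
          rw [Complex.conj_ofReal, hcc]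
          norm_num
        rw [hco, one_smul, one_smul] at hd
        have e1 : toE (R S (v k) (v l) + R S (v l) (v k))
            = toE (R S ((c:ℂ) • v k + (c:ℂ) • v l) ((c:ℂ) • v k + (c:ℂ) • v l) - Dm)
              - toE (R S ((c:ℂ) • v k + (-(c:ℂ)) • v l) ((c:ℂ) • v k + (-(c:ℂ)) • v l) - Dm) := by
          rw [← toE_sub, sub_sub_sub_cancel_right, hd]
        rw [e1]
        refine le_trans (norm_sub_le _ _) ?_
        have b1 := hcombo (c : ℂ) (c : ℂ) (by rw [hnc]; norm_num)
        have b2 := hcombo (c : ℂ) (-(c : ℂ)) (by rw [norm_neg, hnc]; norm_num)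
        linarith
      -- bound on the antihermitian part
      have hG : ‖toE (R S (v k) (v l) - R S (v l) (v k))‖ ≤ 2 * ε := by
        have hd := cross_diff S (v k) (v l) (c : ℂ) ((c : ℂ) * Complex.I)
        have hco1 : (2 * ((c : ℂ) * (starRingEnd ℂ) ((c : ℂ) * Complex.I))) = -Complex.I := by
          simp only [_root_.map_mul, Complex.conj_ofReal, Complex.conj_I]
          linear_combination (-2 * Complex.I) * hcc
        have hco2 : (2 * (((c : ℂ) * Complex.I) * (starRingEnd ℂ) (c : ℂ))) = Complex.I := by
          simp only [Complex.conj_ofReal]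
          linear_combination (2 * Complex.I) * hcc
        rw [hco1, hco2] at hd
        have e2 : Complex.I • toE (R S (v k) (v l) - R S (v l) (v k))
            = toE (R S ((c:ℂ) • v k + (-((c:ℂ) * Complex.I)) • v l)
                    ((c:ℂ) • v k + (-((c:ℂ) * Complex.I)) • v l) - Dm)
              - toE (R S ((c:ℂ) • v k + ((c:ℂ) * Complex.I) • v l)
                    ((c:ℂ) • v k + ((c:ℂ) * Complex.I) • v l) - Dm) := by
          rw [← toE_sub, sub_sub_sub_cancel_right, ← toE_smul]
          congr 1
          rw [show R S ((c:ℂ) • v k + (-((c:ℂ) * Complex.I)) • v l)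
                    ((c:ℂ) • v k + (-((c:ℂ) * Complex.I)) • v l)
              - R S ((c:ℂ) • v k + ((c:ℂ) * Complex.I) • v l)
                    ((c:ℂ) • v k + ((c:ℂ) * Complex.I) • v l)
            = -(R S ((c:ℂ) • v k + ((c:ℂ) * Complex.I) • v l)
                    ((c:ℂ) • v k + ((c:ℂ) * Complex.I) • v l)
              - R S ((c:ℂ) • v k + (-((c:ℂ) * Complex.I)) • v l)
                    ((c:ℂ) • v k + (-((c:ℂ) * Complex.I)) • v l)) from by abel, hd]
          simp only [smul_sub, neg_smul, neg_add_rev, neg_neg]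
          abel
        have : ‖toE (R S (v k) (v l) - R S (v l) (v k))‖
            = ‖Complex.I • toE (R S (v k) (v l) - R S (v l) (v k))‖ := by
          rw [norm_smul, Complex.norm_I, one_mul]
        rw [this, e2]
        refine le_trans (norm_sub_le _ _) ?_
        have b1 := hcombo (c : ℂ) (-((c : ℂ) * Complex.I))
          (by rw [norm_neg, norm_mul, Complex.norm_I, mul_one, hnc]; norm_num)
        have b2 := hcombo (c : ℂ) ((c : ℂ) * Complex.I)
          (by rw [norm_mul, Complex.norm_I, mul_one, hnc]; norm_num)
        linarith
      -- combine via Pythagoras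
      have hHherm : (R S (v k) (v l) + R S (v l) (v k))ᴴ
          = R S (v k) (v l) + R S (v l) (v k) := by
        rw [Matrix.conjTranspose_add, R_conjTranspose, R_conjTranspose, add_comm]
      have hGskew : (R S (v k) (v l) - R S (v l) (v k))ᴴ
          = -(R S (v k) (v l) - R S (v l) (v k)) := by
        rw [Matrix.conjTranspose_sub, R_conjTranspose, R_conjTranspose, neg_sub]
      have hre0 := re_inner_toE_herm_skew _ _ hHherm hGskew
      have hsum : toE (R S (v k) (v l)) = ((2 : ℂ)⁻¹) •
          (toE (R S (v k) (v l) + R S (v l) (v k))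
            + toE (R S (v k) (v l) - R S (v l) (v k))) := by
        rw [← toE_add, ← toE_smul]
        congr 1
        have h2s : (R S (v k) (v l) + R S (v l) (v k)) + (R S (v k) (v l) - R S (v l) (v k))
            = (2 : ℂ) • R S (v k) (v l) := by
          rw [two_smul]
          abel
        rw [h2s, smul_smul]
        norm_num
      rw [hsum, norm_smul]
      have hn2 : ‖((2 : ℂ)⁻¹)‖ = 2⁻¹ := by norm_num
      rw [hn2]
      have hpyth := norm_add_sq (𝕜 := ℂ) (toE (R S (v k) (v l) + R S (v l) (v k)))
        (toE (R S (v k) (v l) - R S (v l) (v k)))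
      have hn1 := norm_nonneg (toE (R S (v k) (v l) + R S (v l) (v k)))
      have hn2' := norm_nonneg (toE (R S (v k) (v l) - R S (v l) (v k)))
      have hre0' : RCLike.re (inner (𝕜 := ℂ) (toE (R S (v k) (v l) + R S (v l) (v k)))
          (toE (R S (v k) (v l) - R S (v l) (v k)))) = 0 := hre0
      nlinarith [hH, hG, hε]
    -- lower bound for B
    have hBlow : (K : ℝ) * dSR⁻¹ ≤ enumB S P := by
      rw [hBsum]
      have hterm : ∀ k ∈ I₁, dSR⁻¹ ≤ ∑ l ∈ I₁, ‖toE (R S (v k) (v l))‖ ^ 2 := by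
        intro k hk
        have h1 : ‖toE (R S (v k) (v k))‖ ^ 2 ≤ ∑ l ∈ I₁, ‖toE (R S (v k) (v l))‖ ^ 2 :=
          Finset.single_le_sum (f := fun l => ‖toE (R S (v k) (v l))‖ ^ 2)
            (fun l _ => by positivity) hk
        have h2' : dSR⁻¹ ≤ ‖toE (R S (v k) (v k))‖ ^ 2 := by
          rw [hdiagEq k hk]
          nlinarith [sq_nonneg ‖toE (R S (v k) (v k) - Dm)‖]
        linarith
      calc (K : ℝ) * dSR⁻¹ = ∑ _k ∈ I₁, dSR⁻¹ := by
            rw [Finset.sum_const, hcard1, nsmul_eq_mul]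
        _ ≤ _ := Finset.sum_le_sum hterm
    -- upper bound for B
    have hK1 : (1 : ℝ) ≤ (K : ℝ) := by exact_mod_cast hK
    have hBup : enumB S P ≤ (K : ℝ) * (dSR⁻¹ + ε ^ 2 * (1 + ((K : ℝ) + 1) * dSR)) := by
      rw [hBsum]
      have hker : ∀ k ∈ I₁, ∑ l ∈ I₁, ‖toE (R S (v k) (v l))‖ ^ 2
          ≤ dSR⁻¹ + ε ^ 2 + ((K : ℝ) - 1) * (2 * ε ^ 2) := by
        intro k hk
        rw [← Finset.add_sum_erase _ _ hk]
        have hd1 : ‖toE (R S (v k) (v k))‖ ^ 2 ≤ dSR⁻¹ + ε ^ 2 := by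
          rw [hdiagEq k hk]
          have := hdiagbnd k hk
          nlinarith [norm_nonneg (toE (R S (v k) (v k) - Dm))]
        have hd2 : ∑ l ∈ I₁.erase k, ‖toE (R S (v k) (v l))‖ ^ 2
            ≤ ((K : ℝ) - 1) * (2 * ε ^ 2) := by
          have hb : ∀ l ∈ I₁.erase k, ‖toE (R S (v k) (v l))‖ ^ 2 ≤ 2 * ε ^ 2 := by
            intro l hl
            exact hcross k hk l (Finset.mem_of_mem_erase hl)
              (Ne.symm (Finset.ne_of_mem_erase hl))
          calc ∑ l ∈ I₁.erase k, ‖toE (R S (v k) (v l))‖ ^ 2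
              ≤ ∑ _l ∈ I₁.erase k, (2 * ε ^ 2) := Finset.sum_le_sum hb
            _ = ((I₁.erase k).card : ℝ) * (2 * ε ^ 2) := by
                rw [Finset.sum_const, nsmul_eq_mul]
            _ = ((K : ℝ) - 1) * (2 * ε ^ 2) := by
                rw [Finset.card_erase_of_mem hk, hcard1]
                congr 1
                rw [Nat.cast_sub hK]
                norm_num
        linarith
      calc ∑ k ∈ I₁, ∑ l ∈ I₁, ‖toE (R S (v k) (v l))‖ ^ 2
          ≤ ∑ _k ∈ I₁, (dSR⁻¹ + ε ^ 2 + ((K : ℝ) - 1) * (2 * ε ^ 2)) :=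
            Finset.sum_le_sum hker
        _ = (K : ℝ) * (dSR⁻¹ + ε ^ 2 + ((K : ℝ) - 1) * (2 * ε ^ 2)) := by
            rw [Finset.sum_const, hcard1, nsmul_eq_mul]
        _ ≤ (K : ℝ) * (dSR⁻¹ + ε ^ 2 * (1 + ((K : ℝ) + 1) * dSR)) := by
            have hkey : 2 * ((K : ℝ) - 1) ≤ ((K : ℝ) + 1) * dSR := by nlinarith
            have hKpos : (0 : ℝ) ≤ (K : ℝ) := by positivity
            nlinarith [sq_nonneg ε]
    refine ⟨hApair, ?_, ?_⟩
    · rw [div_eq_mul_inv]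
      exact hBlow
    · rw [one_div]
      exact hBup

end ApproxKUniform
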